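/- Let F : ℤ → ℝ be supported on {-n,...,n-1}, with cyclic shifts F_τ as above. Define the periodic third-order autocorrelation on period 4n: A_F(x₁,x₂) = (1/2n) Σ_{x=-2n}^{2n-1} F(x) F((x+x₁) mod 4n) F((x+x₂) mod 4n), where residues mod 4n are taken in {-2n,...,2n-1}. Then the rotationally averaged third-order autocorrelation satisfies V_F(x₁,x₂) = (1/2n) Σ_{τ=-n}^{n-1} A_{F_τ}(x₁,x₂) for all x₁,x₂ ∈ {-2n,...,2n-1}. -/
import Mathlib


/-- Representative of `a` modulo `2n` taken in `{-n,...,n-1}`. -/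
def crep (n a : ℤ) : ℤ := (a + n) % (2 * n) - n

/-- The cyclic shift `F_τ` of a signal `F` supported on `{-n,...,n-1}`. -/
noncomputable def cyc (n : ℤ) (F : ℤ → ℝ) (τ x : ℤ) : ℝ :=
  if -n ≤ x ∧ x < n then F (crep n (x + τ)) else 0

/-- The rotationally averaged third-order autocorrelation `V_F`. -/
noncomputable def Vauto (n : ℤ) (F : ℤ → ℝ) (x₁ x₂ : ℤ) : ℝ :=
  (1 / (2 * (n : ℝ))) * ∑ τ ∈ Finset.Ico (-n) n,
    (1 / (2 * (n : ℝ))) * ∑ x ∈ Finset.Ico (-n) n,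
      cyc n F τ x * cyc n F τ (x + x₁) * cyc n F τ (x + x₂)

/-- Representative of `a` modulo `4n` taken in `{-2n,...,2n-1}`. -/
def crep4 (n a : ℤ) : ℤ := (a + 2 * n) % (4 * n) - 2 * n

/-- The periodic (period `4n`) third-order autocorrelation `A_F`. -/
noncomputable def Aper (n : ℤ) (F : ℤ → ℝ) (x₁ x₂ : ℤ) : ℝ :=
  (1 / (2 * (n : ℝ))) * ∑ x ∈ Finset.Ico (-(2 * n)) (2 * n),
    F x * F (crep4 n (x + x₁)) * F (crep4 n (x + x₂))


lemma crep4_mid (n z : ℤ) (hn : 0 < n) (h1 : -(2*n) ≤ z) (h2 : z < 2*n) :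
    crep4 n z = z := by
  unfold crep4
  rw [Int.emod_eq_of_lt (by omega) (by omega)]
  ring

lemma crep4_lo (n z : ℤ) (hn : 0 < n) (h1 : z < -(2*n)) (h2 : -(3*n) ≤ z) :
    crep4 n z = z + 4*n := by
  unfold crep4
  have h : z + 2*n = (z + 6*n) + (4*n) * (-1) := by ring
  rw [h, Int.add_mul_emod_self_left, Int.emod_eq_of_lt (by omega) (by omega)]
  ring

lemma crep4_hi (n z : ℤ) (hn : 0 < n) (h1 : 2*n ≤ z) (h2 : z < 3*n) :
    crep4 n z = z - 4*n := by
  unfold crep4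
  have h : z + 2*n = (z - 2*n) + (4*n) * 1 := by ring
  rw [h, Int.add_mul_emod_self_left, Int.emod_eq_of_lt (by omega) (by omega)]
  ring

lemma cyc_crep4 (n : ℤ) (hn : 0 < n) (F : ℤ → ℝ) (τ z : ℤ)
    (h1 : -(3*n) ≤ z) (h2 : z < 3*n) :
    cyc n F τ (crep4 n z) = cyc n F τ z := by
  rcases lt_or_ge z (-(2*n)) with h | h
  · rw [crep4_lo n z hn h h1, cyc, cyc, if_neg (by omega), if_neg (by omega)]
  · rcases lt_or_ge z (2*n) with h' | h'
    · rw [crep4_mid n z hn h h']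
    · rw [crep4_hi n z hn h' h2, cyc, cyc, if_neg (by omega), if_neg (by omega)]

theorem stmt3 (n : ℤ) (hn : 0 < n) (F : ℤ → ℝ)
    (hF : ∀ x : ℤ, (x < -n ∨ n ≤ x) → F x = 0)
    (x₁ x₂ : ℤ) (hx₁ : x₁ ∈ Finset.Ico (-(2 * n)) (2 * n))
    (hx₂ : x₂ ∈ Finset.Ico (-(2 * n)) (2 * n)) :
    Vauto n F x₁ x₂ =
      (1 / (2 * (n : ℝ))) * ∑ τ ∈ Finset.Ico (-n) n,
        Aper n (fun x => cyc n F τ x) x₁ x₂ := by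
  simp only [Finset.mem_Ico] at hx₁ hx₂
  unfold Vauto Aper
  congr 1
  apply Finset.sum_congr rfl
  intro τ hτ
  congr 1
  rw [← Finset.sum_subset
      (Finset.Ico_subset_Ico (by omega) (by omega) :
        Finset.Ico (-n) n ⊆ Finset.Ico (-(2*n)) (2*n))]
  · apply Finset.sum_congr rfl
    intro x hx
    simp only [Finset.mem_Ico] at hx
    simp only []
    rw [cyc_crep4 n hn F τ (x+x₁) (by omega) (by omega),
        cyc_crep4 n hn F τ (x+x₂) (by omega) (by omega)]
  · intro x hx hx'
    simp only [Finset.mem_Ico] at hx hx'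
    have : cyc n F τ x = 0 := by rw [cyc, if_neg (by omega)]
    simp only []
    rw [this]
    ring
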